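/- arXiv:1202.6461 — 3 statements merged into one kernel-verified Lean document; each statement's English description precedes it below -/
import Mathlib

section
/- Let D be an acyclic orientation of a graph G with no dependent arcs, and let D' be obtained from D by a source-reversal at a source u. Then D' has no dependent arcs. -/
/-!
Since `u` is a source of `D`, it is a sink of `D' = srev D u`, and `D'` agrees with `D` away
from `u`; in particular `D'` is again acyclic. An acyclic orientation has a dependent arc
`x → y` exactly when it contains a second directed path from `x` to `y`. Such a detour for an
arc of `D'` ending at some `y ≠ u` cannot pass through the sink `u`, so it is a detour in `D`.
A detour `x ⇝ u` for a reversed arc `x → u` must end with a reversed arc `w → u` with `w ≠ x`,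
and then `u → x ⇝ w` is a detour in `D` for the arc `u → w`.
-/

variable {V : Type*}

/-- An orientation of a simple graph `G`: each edge gets exactly one direction. -/
structure Orient (G : SimpleGraph V) where
  dir : V → V → Prop
  dir_adj : ∀ u v, dir u v → G.Adj u v
  adj_dir : ∀ u v, G.Adj u v → dir u v ∨ dir v u
  asymm : ∀ u v, dir u v → ¬ dir v u

/-- The relation obtained from `dir` by reversing the single arc `u → v`. -/
def reverseArc (dir : V → V → Prop) (u v : V) : V → V → Prop :=
  fun a b => (dir a b ∧ ¬(a = u ∧ b = v)) ∨ (a = v ∧ b = u)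

/-- A relation is acyclic if there is no directed cycle. -/
def IsAcyclicRel (dir : V → V → Prop) : Prop :=
  ∀ u v, dir u v → ¬ Relation.ReflTransGen dir v u

/-- An arc `u → v` is dependent if its reversal creates a directed cycle. -/
def DependentArc (dir : V → V → Prop) (u v : V) : Prop :=
  dir u v ∧ ¬ IsAcyclicRel (reverseArc dir u v)

/-- A cover graph admits an acyclic orientation with no dependent arcs. -/
def IsCoverGraph (G : SimpleGraph V) : Prop :=
  ∃ D : Orient G, IsAcyclicRel D.dir ∧ ∀ u v, ¬ DependentArc D.dir u v

/-- The number of dependent arcs of an orientation. -/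
noncomputable def numDependent {G : SimpleGraph V} (D : Orient G) : ℕ :=
  Set.ncard {p : V × V | DependentArc D.dir p.1 p.2}

/-- `d_min`: minimum number of dependent arcs over all acyclic orientations. -/
noncomputable def dmin (G : SimpleGraph V) : ℕ :=
  sInf {n | ∃ D : Orient G, IsAcyclicRel D.dir ∧ numDependent D = n}

/-- `d_max`: maximum number of dependent arcs over all acyclic orientations. -/
noncomputable def dmax (G : SimpleGraph V) : ℕ :=
  sSup {n | ∃ D : Orient G, IsAcyclicRel D.dir ∧ numDependent D = n}

/-- `c(G)`: minimum number of edges to delete from `G` to get a cover graph. -/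
noncomputable def coverDeletion (G : SimpleGraph V) : ℕ :=
  sInf {n | ∃ F : Set (Sym2 V), F ⊆ G.edgeSet ∧ IsCoverGraph (G.deleteEdges F) ∧ F.ncard = n}

/-- The generalized Mycielski graph `M_m(G)`; `none` is the apex `u`,
`some (i, a)` is the vertex `⟨i, a⟩`. -/
def genMycielski (G : SimpleGraph V) (m : ℕ) : SimpleGraph (Option (Fin (m + 1) × V)) where
  Adj x y :=
    match x, y with
    | some (i, a), some (j, b) =>
        G.Adj a b ∧ ((i = j ∧ (i : ℕ) = 0) ∨ (i : ℕ) + 1 = (j : ℕ) ∨ (j : ℕ) + 1 = (i : ℕ))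
    | some (i, _), none => (i : ℕ) = m
    | none, some (j, _) => (j : ℕ) = m
    | none, none => False
  symm := by
    constructor
    rintro (_ | ⟨i, a⟩) (_ | ⟨j, b⟩) h
    · exact h
    · exact h
    · exact h
    · refine ⟨h.1.symm, ?_⟩
      rcases h.2 with ⟨h1, h2⟩ | h' | h'
      · exact Or.inl ⟨h1.symm, h1 ▸ h2⟩
      · exact Or.inr (Or.inr h')
      · exact Or.inr (Or.inl h')
  loopless := by
    constructor
    rintro (_ | ⟨i, a⟩) h <;> simp_all

/-- Source reversal at `u`: all arcs outgoing from `u` are reversed. -/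
def srev (dir : V → V → Prop) (u : V) : V → V → Prop :=
  fun a b => (dir a b ∧ a ≠ u) ∨ (dir b a ∧ b = u)

/-- A source: a vertex with no ingoing arcs. -/
def IsSource (dir : V → V → Prop) (u : V) : Prop := ∀ v, ¬ dir v u

open Relation

def deleteArc (r : V → V → Prop) (x y : V) : V → V → Prop :=
  fun p q => r p q ∧ ¬(p = x ∧ q = y)

def avoiding (r : V → V → Prop) (u : V) : V → V → Prop :=
  fun p q => r p q ∧ p ≠ u ∧ q ≠ u

def IsSink (r : V → V → Prop) (u : V) : Prop := ∀ v, ¬ r u v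

section

variable {r s : V → V → Prop} {a b u x y : V}

theorem reflTransGen_reverseArc (h : ReflTransGen (reverseArc r x y) a b) :
    ReflTransGen (deleteArc r x y) a b ∨
      ReflTransGen (deleteArc r x y) a y ∧ ReflTransGen (deleteArc r x y) x b := by
  induction h using ReflTransGen.head_induction_on with
  | refl => exact Or.inl .refl
  | head hac _ ih =>
    rcases hac with hac | ⟨rfl, rfl⟩
    · exact ih.imp (·.head hac) fun ⟨hcy, hxb⟩ => ⟨hcy.head hac, hxb⟩
    · exact Or.inr ⟨.refl, ih.elim id And.right⟩

theorem IsAcyclicRel.dependentArc_iff (hr : IsAcyclicRel r) :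
    DependentArc r x y ↔ r x y ∧ ReflTransGen (deleteArc r x y) x y := by
  constructor
  · rintro ⟨hxy, hcycle⟩
    refine ⟨hxy, ?_⟩
    simp only [IsAcyclicRel, not_forall, not_not] at hcycle
    obtain ⟨p, q, hpq, hqp⟩ := hcycle
    rcases hpq with hpq | ⟨rfl, rfl⟩
    · rcases reflTransGen_reverseArc hqp with hqp | ⟨hqy, hxp⟩
      · exact absurd (ReflTransGen.mono (fun _ _ h => h.1) _ _ hqp) (hr p q hpq.1)
      · exact (hxp.tail hpq).trans hqy
    · exact (reflTransGen_reverseArc hqp).elim id And.right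
  · rintro ⟨hxy, hdetour⟩
    exact ⟨hxy, fun hacyc =>
      hacyc y x (Or.inr ⟨rfl, rfl⟩) (ReflTransGen.mono (fun _ _ => Or.inl) _ _ hdetour)⟩

theorem IsSink.mono (hu : IsSink s u) (hrs : ∀ a b, r a b → s a b) : IsSink r u :=
  fun v h => hu v (hrs u v h)

theorem IsSink.ne_of_reflTransGen (hu : IsSink r u) (h : ReflTransGen r a b) (hb : b ≠ u) :
    a ≠ u := by
  rcases h.cases_head with rfl | ⟨c, hac, -⟩
  · exact hb
  · rintro rfl
    exact hu c hac

theorem IsSink.reflTransGen_avoiding (hu : IsSink r u) (h : ReflTransGen r a b) (hb : b ≠ u) :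
    ReflTransGen (avoiding r u) a b := by
  induction h with
  | refl => exact .refl
  | @tail c _ _ hcb ih =>
    have hc : c ≠ u := by
      rintro rfl
      exact hu _ hcb
    exact (ih hc).tail ⟨hcb, hc, hb⟩

theorem IsSource.isSink_srev (hu : IsSource r u) : IsSink (srev r u) u := by
  rintro v (⟨-, huu⟩ | ⟨hvu, -⟩)
  · exact huu rfl
  · exact hu v hvu

theorem IsSource.of_srev_to (hu : IsSource r u) (h : srev r u a u) : r u a :=
  h.elim (fun h => absurd h.1 (hu a)) And.left

theorem of_srev_of_ne (h : srev r u a b) (hb : b ≠ u) : r a b :=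
  h.elim And.left fun h => absurd h.2 hb

theorem isAcyclicRel_srev (hr : IsAcyclicRel r) (hu : IsSource r u) :
    IsAcyclicRel (srev r u) := by
  intro p q hpq hqp
  have hp : p ≠ u := by
    rintro rfl
    exact hu.isSink_srev q hpq
  have hq : q ≠ u := hu.isSink_srev.ne_of_reflTransGen hqp hp
  exact hr p q (of_srev_of_ne hpq hq)
    (ReflTransGen.mono (fun _ _ h => of_srev_of_ne h.1 h.2.2) _ _
      (hu.isSink_srev.reflTransGen_avoiding hqp hp))

end

theorem srev_no_dependent {G : SimpleGraph V} (D : Orient G)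
    (hD : IsAcyclicRel D.dir) (hnd : ∀ a b, ¬ DependentArc D.dir a b)
    (u : V) (hu : IsSource D.dir u) :
    ∀ a b, ¬ DependentArc (srev D.dir u) a b := by
  intro x y hdep
  obtain ⟨hxy, hdetour⟩ := (isAcyclicRel_srev hD hu).dependentArc_iff.1 hdep
  have hsink : IsSink (deleteArc (srev D.dir u) x y) u := hu.isSink_srev.mono fun _ _ h => h.1
  rcases hxy with ⟨hxy, -⟩ | ⟨hux, hyu⟩
  · have hy : y ≠ u := by
      rintro rfl
      exact hu x hxy
    refine hnd x y (hD.dependentArc_iff.2 ⟨hxy, ?_⟩)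
    exact ReflTransGen.mono (fun _ _ h => ⟨of_srev_of_ne h.1.1 h.2.2, h.1.2⟩) _ _
      (hsink.reflTransGen_avoiding hdetour hy)
  · subst y
    obtain hux' | ⟨w, hxw, hwu, hwx⟩ := hdetour.cases_tail
    · exact hD u x hux (hux' ▸ .refl)
    have huw : D.dir u w := hu.of_srev_to hwu
    have hw : w ≠ u := by
      rintro rfl
      exact hD w w huw .refl
    refine hnd u w (hD.dependentArc_iff.2 ⟨huw, ?_⟩)
    refine ReflTransGen.head ⟨hux, fun h => hwx ⟨h.2.symm, rfl⟩⟩ ?_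
    exact ReflTransGen.mono (fun _ _ h => ⟨of_srev_of_ne h.1.1 h.2.2, fun h' => h.2.1 h'.1⟩) _ _
      (hsink.reflTransGen_avoiding hxw hw)
end

section
/- Let D be an acyclic orientation of a connected graph G. For any vertex u of G, there exists an acyclic orientation D' of G obtained from D by a finite sequence of source-reversals such that u is the unique source of D'. -/
variable {V : Type*}

/-- One step of source-reversal between relations. -/
def SrevStep (d d' : V → V → Prop) : Prop :=
  ∃ u, IsSource d u ∧ d' = srev d u

/-!
Fire sources other than `u` for as long as possible. An edge changes direction exactly when one
of its endpoints fires, and only the tail of an arc can fire, so along any such firing sequence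
the endpoints of an edge of `D` have fired equally often or the tail once more. Since `u` never
fires, a vertex `v` fires at most `dist v u` times and the process stops. When it stops, the
current orientation is still acyclic, hence has a source, and that source can only be `u`.
-/

section SourceReversal

variable {d : V → V → Prop} {s : V}

lemma IsSource.not_srev_self (hs : IsSource d s) (b : V) : ¬ srev d s s b := by
  rintro (⟨-, h⟩ | ⟨h, rfl⟩)
  · exact h rfl
  · exact hs b h

lemma IsSource.eq_of_reflTransGen_srev (hs : IsSource d s) {a : V}
    (h : Relation.ReflTransGen (srev d s) s a) : a = s := by
  rcases h.cases_head with h | ⟨c, hc, -⟩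
  · exact h.symm
  · exact absurd hc (hs.not_srev_self c)

lemma IsSource.reflTransGen_of_reflTransGen_srev (hs : IsSource d s) {a b : V}
    (h : Relation.ReflTransGen (srev d s) a b) (hb : b ≠ s) : Relation.ReflTransGen d a b := by
  induction h using Relation.ReflTransGen.head_induction_on with
  | refl => exact .refl
  | @head a c hac hcb ih =>
    rcases hac with ⟨hac, -⟩ | ⟨-, rfl⟩
    · exact .head hac ih
    · exact absurd (hs.eq_of_reflTransGen_srev hcb) hb

lemma IsAcyclicRel.srev (hd : IsAcyclicRel d) (hs : IsSource d s) :
    IsAcyclicRel (srev d s) := by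
  rintro a b (⟨hab, ha⟩ | ⟨hba, rfl⟩) hba'
  · exact hd a b hab (hs.reflTransGen_of_reflTransGen_srev hba' ha)
  · obtain rfl := hs.eq_of_reflTransGen_srev hba'
    exact hs a hba

lemma IsAcyclicRel.exists_isSource [Finite V] [Nonempty V] (hd : IsAcyclicRel d) :
    ∃ s, IsSource d s := by
  have : IsStrictOrder V (Relation.TransGen d) :=
    { trans := fun _ _ _ => Relation.TransGen.trans
      irrefl := fun a h => by
        obtain ⟨b, hab, hba⟩ := Relation.TransGen.head'_iff.mp h
        exact hd a b hab hba }
  obtain ⟨s, -, hmin⟩ :=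
    (Finite.wellFounded_of_trans_of_irrefl (Relation.TransGen d)).has_min Set.univ
      Set.univ_nonempty
  exact ⟨s, fun v hv => hmin v trivial (.single hv)⟩

end SourceReversal

namespace Orient

variable {G : SimpleGraph V}

def srev (O : Orient G) (s : V) : Orient G where
  dir := _root_.srev O.dir s
  dir_adj := by
    rintro a b (⟨h, -⟩ | ⟨h, -⟩)
    · exact O.dir_adj a b h
    · exact (O.dir_adj b a h).symm
  adj_dir a b hab := by
    rcases O.adj_dir a b hab with h | h
    · by_cases ha : a = s
      · exact .inr (.inr ⟨h, ha⟩)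
      · exact .inl (.inl ⟨h, ha⟩)
    · by_cases hb : b = s
      · exact .inl (.inr ⟨h, hb⟩)
      · exact .inr (.inl ⟨h, hb⟩)
  asymm := by
    rintro a b (⟨h₁, h₂⟩ | ⟨h₁, h₂⟩) (⟨h₃, h₄⟩ | ⟨h₃, h₄⟩)
    · exact O.asymm a b h₁ h₃
    · exact h₂ h₄
    · exact h₄ h₂
    · exact O.asymm b a h₁ h₃

def srevList (O : Orient G) (l : List V) : Orient G :=
  l.foldl srev O

def IsFiringSeq (u : V) : Orient G → List V → Prop
  | _, [] => True
  | O, s :: l => IsSource O.dir s ∧ s ≠ u ∧ IsFiringSeq u (O.srev s) l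

variable {u : V}

lemma IsFiringSeq.reflTransGen_srevStep :
    ∀ {O : Orient G} {l : List V}, IsFiringSeq u O l →
      Relation.ReflTransGen SrevStep O.dir (O.srevList l).dir
  | _, [], _ => .refl
  | _, s :: _, ⟨hs, _, hl⟩ => .head ⟨s, hs, rfl⟩ hl.reflTransGen_srevStep

lemma IsFiringSeq.isAcyclicRel :
    ∀ {O : Orient G} {l : List V}, IsFiringSeq u O l → IsAcyclicRel O.dir →
      IsAcyclicRel (O.srevList l).dir
  | _, [], _, hO => hO
  | _, _ :: _, ⟨hs, _, hl⟩, hO => hl.isAcyclicRel (hO.srev hs)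

lemma IsFiringSeq.concat :
    ∀ {O : Orient G} {l : List V} {w : V}, IsFiringSeq u O l →
      IsSource (O.srevList l).dir w → w ≠ u → IsFiringSeq u O (l ++ [w])
  | _, [], _, _, hw, hwu => ⟨hw, hwu, trivial⟩
  | _, _ :: _, _, ⟨hs, hsu, hl⟩, hw, hwu => ⟨hs, hsu, hl.concat hw hwu⟩

lemma IsFiringSeq.not_mem : ∀ {O : Orient G} {l : List V}, IsFiringSeq u O l → u ∉ l
  | _, [], _ => List.not_mem_nil
  | _, _ :: _, ⟨_, hsu, hl⟩ => List.not_mem_cons_of_ne_of_not_mem hsu.symm hl.not_mem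

section Count

variable [DecidableEq V]

lemma IsFiringSeq.count_of_dir :
    ∀ {O : Orient G} {l : List V}, IsFiringSeq u O l → ∀ {a b : V}, O.dir a b →
      (l.count a = l.count b ∧ (O.srevList l).dir a b) ∨
        (l.count a = l.count b + 1 ∧ (O.srevList l).dir b a)
  | _, [], _, _, _, hab => .inl ⟨rfl, hab⟩
  | O, s :: l, ⟨hs, _, hl⟩, a, b, hab => by
    have hbs : b ≠ s := fun h => hs a (h ▸ hab)
    rw [List.count_cons_of_ne hbs.symm]
    by_cases has : a = s
    · subst has
      rw [List.count_cons_self]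
      rcases hl.count_of_dir (show (O.srev a).dir b a from .inr ⟨hab, rfl⟩) with
        ⟨hc, hd⟩ | ⟨hc, hd⟩
      · exact .inr ⟨by rw [hc], hd⟩
      · exact .inl ⟨hc.symm, hd⟩
    · rw [List.count_cons_of_ne (Ne.symm has)]
      exact hl.count_of_dir (show (O.srev s).dir a b from .inl ⟨hab, has⟩)

lemma IsFiringSeq.count_le_count_add_one {O : Orient G} {l : List V} (hl : IsFiringSeq u O l)
    {a b : V} (hab : G.Adj a b) : l.count a ≤ l.count b + 1 := by
  rcases O.adj_dir a b hab with h | h <;>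
    rcases hl.count_of_dir h with ⟨hc, -⟩ | ⟨hc, -⟩ <;> omega

lemma IsFiringSeq.count_le_length {O : Orient G} {l : List V} (hl : IsFiringSeq u O l) :
    ∀ {v : V} (p : G.Walk v u), l.count v ≤ p.length
  | _, .nil => (List.count_eq_zero_of_not_mem hl.not_mem).le
  | _, .cons hadj p =>
    (hl.count_le_count_add_one hadj).trans (Nat.add_le_add_right (hl.count_le_length p) 1)

lemma IsFiringSeq.length_le_sum_dist [Fintype V] (hG : G.Connected) {O : Orient G}
    {l : List V} (hl : IsFiringSeq u O l) : l.length ≤ ∑ v, G.dist v u := by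
  calc l.length = ∑ v, l.count v := by
        simpa using (Multiset.sum_count_eq_card (s := Finset.univ) (m := (l : Multiset V))
          fun a _ => Finset.mem_univ a).symm
    _ ≤ ∑ v, G.dist v u := Finset.sum_le_sum fun v _ => by
        obtain ⟨p, hp⟩ := hG.exists_walk_length_eq_dist v u
        exact hp ▸ hl.count_le_length p

end Count

lemma exists_isFiringSeq_forall_isSource_eq [Finite V] (hG : G.Connected) (O : Orient G) :
    ∃ l, IsFiringSeq u O l ∧ ∀ w, IsSource (O.srevList l).dir w → w = u := by
  classical
  have := Fintype.ofFinite V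
  set N := ∑ v, G.dist v u
  obtain ⟨l, hl, hmax⟩ := (measure fun l : List V => N - l.length).wf.has_min
    {l | IsFiringSeq u O l} ⟨[], trivial⟩
  refine ⟨l, hl, fun w hw => by_contra fun hwu => ?_⟩
  have hl' := hl.concat hw hwu
  have hlen : l.length + 1 ≤ N := by simpa using hl'.length_le_sum_dist hG
  refine hmax _ hl' (show N - (l ++ [w]).length < N - l.length from ?_)
  rw [List.length_append, List.length_singleton]
  omega

end Orient

theorem mosesian [Finite V] {G : SimpleGraph V} (hG : G.Connected)
    (D : Orient G) (hD : IsAcyclicRel D.dir) (u : V) :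
    ∃ D' : Orient G, Relation.ReflTransGen SrevStep D.dir D'.dir ∧
      IsAcyclicRel D'.dir ∧ IsSource D'.dir u ∧ ∀ w, IsSource D'.dir w → w = u := by
  obtain ⟨l, hl, huniq⟩ := Orient.exists_isFiringSeq_forall_isSource_eq (u := u) hG D
  have hacyc := hl.isAcyclicRel hD
  have : Nonempty V := ⟨u⟩
  obtain ⟨s, hs⟩ := hacyc.exists_isSource
  obtain rfl := huniq s hs
  exact ⟨_, hl.reflTransGen_srevStep, hacyc, hs, huniq⟩
end

section
/- If G is a triangle-free graph with at least two edges and d_min(G) ≥ 1, then d_min(M_m(G)) ≥ d_min(G) + 2 for every positive integer m. -/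
variable {V : Type*}

/-!
Let `D` be an acyclic orientation of `M_m(G)`, `m ≥ 1`. For an independent set `S` of `G`,
putting `S` on level 1 and the other vertices on level 0 embeds `G` as an induced subgraph
of `M_m(G)`; the restriction of `D` to this copy is acyclic and its dependent arcs stay
dependent in `D`, so `D` has at least `d_min(G)` dependent arcs inside the copy.

For `S = ∅` this gives `d_min(G)` dependent arcs of `D` inside level 0. Lifting a vertex `a`
to level 1 removes from the copy every such arc at `⟨0, a⟩`; they must be compensated by
dependent arcs at level 0 or at `⟨1, a⟩`. Applied to both ends `a`, `b` of one level-0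
dependent arc, this forces either a further level-0 dependent arc or two distinct
dependent arcs leaving level 0 (one arc cannot meet both `⟨1, a⟩` and `⟨1, b⟩`, these being
non-adjacent). If no dependent arc leaves level 0, any two level-0 dependent arcs are met by
an independent set of size at most two, since `G` is triangle-free, which forces a second
extra one.
-/

open Set Function

section Orientations

variable {W : Type*} {G : SimpleGraph V} {H : SimpleGraph W}

lemma IsAcyclicRel.comap {r : V → V → Prop} {s : W → W → Prop} (f : V → W)
    (hrs : ∀ x y, r x y → s (f x) (f y)) (hs : IsAcyclicRel s) : IsAcyclicRel r :=
  fun u v huv hvu => hs _ _ (hrs u v huv) (Relation.ReflTransGen.lift f hrs v u hvu)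

lemma isAcyclicRel_lt {α : Type*} [Preorder α] : IsAcyclicRel (V := α) (· < ·) := by
  intro u v huv hvu
  have hvu : v ≤ u := by
    clear huv
    induction hvu with
    | refl => rfl
    | tail _ h ih => exact ih.trans h.le
  exact lt_irrefl _ (huv.trans_le hvu)

lemma DependentArc.map {r : V → V → Prop} {s : W → W → Prop} {f : V → W}
    (hf : Injective f) (hrs : ∀ x y, r x y → s (f x) (f y)) {a b : V} (h : DependentArc r a b) :
    DependentArc s (f a) (f b) := by
  refine ⟨hrs a b h.1, fun hs => h.2 (hs.comap f ?_)⟩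
  rintro x y (⟨hxy, hne⟩ | ⟨rfl, rfl⟩)
  · exact Or.inl ⟨hrs x y hxy, fun he => hne ⟨hf he.1, hf he.2⟩⟩
  · exact Or.inr ⟨rfl, rfl⟩

lemma Orient.exists_isAcyclicRel (G : SimpleGraph V) : ∃ D : Orient G, IsAcyclicRel D.dir := by
  let e := embeddingToCardinal (α := V)
  refine ⟨⟨fun u v => G.Adj u v ∧ e u < e v, fun _ _ h => h.1, fun u v h => ?_,
    fun _ _ h h' => h.2.not_gt h'.2⟩, isAcyclicRel_lt.comap e fun _ _ h => h.2⟩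
  rcases lt_or_gt_of_ne (e.injective.ne h.ne) with h' | h'
  exacts [Or.inl ⟨h, h'⟩, Or.inr ⟨h.symm, h'⟩]

def Orient.comap (D : Orient H) (f : G ↪g H) : Orient G where
  dir a b := D.dir (f a) (f b)
  dir_adj _ _ h := f.map_adj_iff.mp (D.dir_adj _ _ h)
  adj_dir _ _ h := D.adj_dir _ _ (f.map_adj_iff.mpr h)
  asymm _ _ := D.asymm _ _

def depArcs (D : Orient G) : Set (V × V) :=
  {p | DependentArc D.dir p.1 p.2}

lemma dmin_le_numDependent (D : Orient G) (hD : IsAcyclicRel D.dir) : dmin G ≤ numDependent D :=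
  Nat.sInf_le ⟨D, hD, rfl⟩

lemma le_dmin {n : ℕ} (h : ∀ D : Orient G, IsAcyclicRel D.dir → n ≤ numDependent D) :
    n ≤ dmin G := by
  obtain ⟨D, hD⟩ := Orient.exists_isAcyclicRel G
  have hne : {k | ∃ D : Orient G, IsAcyclicRel D.dir ∧ numDependent D = k}.Nonempty :=
    ⟨_, D, hD, rfl⟩
  obtain ⟨D', hD', hD'k⟩ := Nat.sInf_mem hne
  exact (h D' hD').trans_eq hD'k

lemma dmin_le_ncard_depArcs_inter_range [Finite W] (f : G ↪g H) (D : Orient H)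
    (hD : IsAcyclicRel D.dir) : dmin G ≤ (depArcs D ∩ range f ×ˢ range f).ncard := by
  refine (dmin_le_numDependent (D.comap f) (hD.comap f fun _ _ h => h)).trans ?_
  refine ncard_le_ncard_of_injOn (Prod.map f f) ?_ (f.injective.prodMap f.injective).injOn
  rintro ⟨a, b⟩ h
  exact ⟨h.map f.injective fun _ _ h => h, mem_range_self a, mem_range_self b⟩

end Orientations

lemma SimpleGraph.CliqueFree.not_adj_or_not_adj {G : SimpleGraph V} (h : G.CliqueFree 3)
    {c d : V} (hcd : G.Adj c d) (a : V) : ¬ G.Adj a c ∨ ¬ G.Adj a d := by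
  classical
  by_contra! h'
  exact h {a, c, d} (SimpleGraph.is3Clique_triple_iff.mpr ⟨h'.1, h'.2, hcd⟩)

def pairsMeeting {α : Type*} (A : Set α) : Set (α × α) :=
  Prod.fst ⁻¹' A ∪ Prod.snd ⁻¹' A

@[simp]
lemma mem_pairsMeeting {α : Type*} {A : Set α} {p : α × α} :
    p ∈ pairsMeeting A ↔ p.1 ∈ A ∨ p.2 ∈ A :=
  Iff.rfl

section Mycielski

variable {G : SimpleGraph V} {m : ℕ}

@[simp]
lemma genMycielski_adj_some {i j : Fin (m + 1)} {a b : V} :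
    (genMycielski G m).Adj (some (i, a)) (some (j, b)) ↔
      G.Adj a b ∧ ((i = j ∧ (i : ℕ) = 0) ∨ (i : ℕ) + 1 = j ∨ (j : ℕ) + 1 = i) :=
  Iff.rfl

def levelCopy (i : Fin (m + 1)) (S : Set V) : Set (Option (Fin (m + 1) × V)) :=
  (fun a => some (i, a)) '' S

@[simp]
lemma some_mem_levelCopy {i j : Fin (m + 1)} {a : V} {S : Set V} :
    some (j, a) ∈ levelCopy i S ↔ j = i ∧ a ∈ S := by
  simp [levelCopy, and_comm, eq_comm]

open Classical in
noncomputable def levelEmbedding (S : Set V) (hS : G.IsIndepSet S) :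
    G ↪g genMycielski G (m + 1) where
  toFun a := some (if a ∈ S then 1 else 0, a)
  inj' _ _ h := (Prod.ext_iff.mp (Option.some_injective _ h)).2
  map_rel_iff' {a b} := by
    change (genMycielski G (m + 1)).Adj (some (_, a)) (some (_, b)) ↔ G.Adj a b
    by_cases ha : a ∈ S <;> by_cases hb : b ∈ S <;> simp [ha, hb]
    exact fun h => hS ha hb h.ne h

open Classical in
lemma levelEmbedding_apply {S : Set V} (hS : G.IsIndepSet S) (a : V) :
    levelEmbedding (m := m) S hS a = some (if a ∈ S then 1 else 0, a) :=
  rfl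

def lowArcs (D : Orient (genMycielski G m)) :
    Set (Option (Fin (m + 1) × V) × Option (Fin (m + 1) × V)) :=
  depArcs D ∩ levelCopy 0 univ ×ˢ levelCopy 0 univ

def highArcs (D : Orient (genMycielski G m)) :
    Set (Option (Fin (m + 1) × V) × Option (Fin (m + 1) × V)) :=
  depArcs D \ levelCopy 0 univ ×ˢ levelCopy 0 univ

lemma numDependent_eq_ncard_lowArcs_add_ncard_highArcs [Finite V]
    (D : Orient (genMycielski G m)) :
    numDependent D = (lowArcs D).ncard + (highArcs D).ncard :=
  (ncard_inter_add_ncard_sdiff_eq_ncard _ _).symm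

lemma exists_adj_of_mem_lowArcs (D : Orient (genMycielski G m)) {p} (hp : p ∈ lowArcs D) :
    ∃ a b, G.Adj a b ∧ p = (some (0, a), some (0, b)) := by
  obtain ⟨hdep, ⟨a, -, ha⟩, ⟨b, -, hb⟩⟩ := hp
  have hadj := D.dir_adj _ _ hdep.1
  rw [← ha, ← hb] at hadj
  exact ⟨a, b, hadj.1, Prod.ext ha.symm hb.symm⟩

lemma Orient.eq_of_dir_mem_pairsMeeting_levelCopy_one (D : Orient (genMycielski G (m + 1)))
    {z} (hz : D.dir z.1 z.2) {a b : V} (ha : z ∈ pairsMeeting (levelCopy 1 {a}))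
    (hb : z ∈ pairsMeeting (levelCopy 1 {b})) : a = b := by
  obtain ⟨x, y⟩ := z
  -- level 1 carries no edge of `M_{m+1}(G)`
  have hxy := D.dir_adj _ _ hz
  simp only [mem_pairsMeeting, levelCopy, image_singleton, mem_singleton_iff] at ha hb
  rcases ha with rfl | rfl <;> rcases hb with h | h <;> simp_all


lemma depArcs_inter_range_levelEmbedding_subset (D : Orient (genMycielski G (m + 1)))
    {S : Set V} (hS : G.IsIndepSet S) :
    depArcs D ∩ range (levelEmbedding S hS) ×ˢ range (levelEmbedding S hS) ⊆
      lowArcs D \ pairsMeeting (levelCopy 0 S) ∪ highArcs D ∩ pairsMeeting (levelCopy 1 S) := by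
  classical
  rintro ⟨_, _⟩ ⟨hdep, ⟨a, rfl⟩, ⟨b, rfl⟩⟩
  by_cases ha : a ∈ S <;> by_cases hb : b ∈ S <;>
    simp only [levelEmbedding_apply, ha, hb, if_true, if_false] at hdep ⊢ <;>
    simp [lowArcs, highArcs, ha, hb, hdep]

lemma dmin_add_ncard_lowArcs_inter_le [Finite V] (D : Orient (genMycielski G (m + 1)))
    (hD : IsAcyclicRel D.dir) {S : Set V} (hS : G.IsIndepSet S) :
    dmin G + (lowArcs D ∩ pairsMeeting (levelCopy 0 S)).ncard ≤
      (lowArcs D).ncard + (highArcs D ∩ pairsMeeting (levelCopy 1 S)).ncard := by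
  have hdmin := (dmin_le_ncard_depArcs_inter_range (levelEmbedding S hS) D hD).trans
    ((ncard_le_ncard (depArcs_inter_range_levelEmbedding_subset D hS)).trans
      (ncard_union_le _ _))
  have hsplit := ncard_inter_add_ncard_sdiff_eq_ncard (lowArcs D) (pairsMeeting (levelCopy 0 S))
  omega

lemma dmin_le_ncard_lowArcs [Finite V] (D : Orient (genMycielski G (m + 1)))
    (hD : IsAcyclicRel D.dir) : dmin G ≤ (lowArcs D).ncard := by
  simpa [levelCopy, pairsMeeting] using dmin_add_ncard_lowArcs_inter_le D hD (S := ∅) (by simp)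

lemma dmin_add_one_le_ncard_lowArcs [Finite V] (h1 : 1 ≤ dmin G)
    (D : Orient (genMycielski G (m + 1))) (hD : IsAcyclicRel D.dir)
    (hhigh : (highArcs D).ncard ≤ 1) : dmin G + 1 ≤ (lowArcs D).ncard := by
  by_contra! hlow
  obtain ⟨p, hp⟩ : (lowArcs D).Nonempty :=
    nonempty_of_ncard_ne_zero (by have := dmin_le_ncard_lowArcs D hD; omega)
  obtain ⟨a, b, hab, rfl⟩ := exists_adj_of_mem_lowArcs D hp
  have hcompensate : ∀ v ∈ ({a, b} : Set V),
      ∃ z ∈ highArcs D, z ∈ pairsMeeting (levelCopy 1 {v}) := by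
    intro v hv
    have hpv : 1 ≤ (lowArcs D ∩ pairsMeeting (levelCopy 0 {v})).ncard :=
      (ncard_pos (toFinite _)).mpr ⟨_, hp, by simpa [or_comm, eq_comm] using hv⟩
    have := dmin_add_ncard_lowArcs_inter_le D hD (S := {v}) (by simp)
    exact nonempty_of_ncard_ne_zero (s := highArcs D ∩ _) (by omega)
  obtain ⟨za, hza, hza'⟩ := hcompensate a (by simp)
  obtain ⟨zb, hzb, hzb'⟩ := hcompensate b (by simp)
  have hne : za ≠ zb := by
    rintro rfl
    exact hab.ne (D.eq_of_dir_mem_pairsMeeting_levelCopy_one hza.1.1 hza' hzb')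
  have := (one_lt_ncard_iff (toFinite _)).mpr ⟨za, zb, hza, hzb, hne⟩
  omega

lemma dmin_add_two_le_ncard_lowArcs [Finite V] (htf : G.CliqueFree 3) (h1 : 1 ≤ dmin G)
    (D : Orient (genMycielski G (m + 1))) (hD : IsAcyclicRel D.dir)
    (hhigh : highArcs D = ∅) : dmin G + 2 ≤ (lowArcs D).ncard := by
  have hlow := dmin_add_one_le_ncard_lowArcs h1 D hD (by simp [hhigh])
  obtain ⟨p, hp⟩ := nonempty_of_ncard_ne_zero (s := lowArcs D) (by omega)
  obtain ⟨q, hq, hqp⟩ := exists_ne_of_one_lt_ncard (s := lowArcs D) (by omega) p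
  obtain ⟨a, b, -, rfl⟩ := exists_adj_of_mem_lowArcs D hp
  obtain ⟨c, d, hcd, rfl⟩ := exists_adj_of_mem_lowArcs D hq
  obtain ⟨x, hx, hax⟩ : ∃ x ∈ ({c, d} : Set V), ¬ G.Adj a x := by
    rcases htf.not_adj_or_not_adj hcd a with h | h
    exacts [⟨c, by simp, h⟩, ⟨d, by simp, h⟩]
  have hS : G.IsIndepSet {a, x} := pairwise_pair.mpr fun _ => ⟨hax, fun h => hax h.symm⟩
  have hmeet : 2 ≤ (lowArcs D ∩ pairsMeeting (levelCopy 0 {a, x})).ncard := by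
    rw [← ncard_pair hqp.symm]
    refine ncard_le_ncard ?_
    rintro _ (rfl | rfl)
    · exact ⟨hp, by simp⟩
    · refine ⟨hq, ?_⟩
      rcases hx with rfl | rfl <;> simp
  have := dmin_add_ncard_lowArcs_inter_le D hD hS
  rw [hhigh, empty_inter, ncard_empty] at this
  omega

theorem dmin_add_two_le_numDependent [Finite V] (htf : G.CliqueFree 3) (h1 : 1 ≤ dmin G)
    (D : Orient (genMycielski G (m + 1))) (hD : IsAcyclicRel D.dir) :
    dmin G + 2 ≤ numDependent D := by
  rw [numDependent_eq_ncard_lowArcs_add_ncard_highArcs]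
  obtain hhigh | hhigh | hhigh : (highArcs D).ncard = 0 ∨ (highArcs D).ncard = 1 ∨
      2 ≤ (highArcs D).ncard := by omega
  · have := dmin_add_two_le_ncard_lowArcs htf h1 D hD ((ncard_eq_zero (toFinite _)).mp hhigh)
    omega
  · have := dmin_add_one_le_ncard_lowArcs h1 D hD hhigh.le
    omega
  · have := dmin_le_ncard_lowArcs D hD
    omega

end Mycielski

theorem dmin_genMycielski_ge_add_two_general [Fintype V] (G : SimpleGraph V)
    (htf : G.CliqueFree 3) (h1 : 1 ≤ dmin G)
    (m : ℕ) (hm : 0 < m) :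
    dmin G + 2 ≤ dmin (genMycielski G m) := by
  obtain ⟨m, rfl⟩ : ∃ k, m = k + 1 := ⟨m - 1, by omega⟩
  exact le_dmin fun D hD => dmin_add_two_le_numDependent htf h1 D hD

theorem dmin_genMycielski_ge_add_two [Fintype V] (G : SimpleGraph V)
    (htf : G.CliqueFree 3) (h2 : 2 ≤ G.edgeSet.ncard) (h1 : 1 ≤ dmin G)
    (m : ℕ) (hm : 0 < m) :
    dmin G + 2 ≤ dmin (genMycielski G m) :=
  dmin_genMycielski_ge_add_two_general G htf h1 m hm
end
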